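/- arXiv:2601.03876 — 4 statements merged into one kernel-verified Lean document; each statement's English description precedes it below -/
import Mathlib

section
/- For all x with 0 ≤ x ≤ 1, the Rogers dilogarithm satisfies the duplication identity 2·𝓛(x) = 𝓛(x²) + 2·𝓛(x/(1+x)). -/
/-!
Both sides are continuous on `[0, 1]` and agree at `0`, so it suffices that their derivatives
agree on `(0, 1)`. There `𝓛'(x) = -(log (1 - x) / x + log x / (1 - x)) / 2`, and after splitting
`log (1 - x²)`, `log (x / (1 + x))` and `log (1 - x / (1 + x)) = -log (1 + x)` into `log x`,
`log (1 - x)`, `log (1 + x)`, the identity of derivatives is a rational identity. Continuity at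
the endpoints needs the integrability of `log (1 - t) / t` on `[0, 1]` and the continuity of
`log x * log (1 - x)` at `0` and `1`.
-/

open Real MeasureTheory

/-- The real dilogarithm, defined for `x ≤ 1` via the integral
`Li₂(x) = -∫₀ˣ log(1-t)/t dt`. -/
noncomputable def Li2 (x : ℝ) : ℝ := -∫ t in (0:ℝ)..x, Real.log (1 - t) / t

/-- The Rogers dilogarithm `𝓛(x) = Li₂(x) + (1/2)·log|x|·log(1-x)`
(note `Real.log` of a negative number is the log of its absolute value,
and `Real.log 0 = 0`, so this formula also covers `x ≤ 0` and the endpoints). -/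
noncomputable def rogersL (x : ℝ) : ℝ := Li2 x + (1/2) * Real.log x * Real.log (1 - x)

open Set

lemma eq_of_hasDerivAt_zero {f : ℝ → ℝ} {a b : ℝ} (hab : a ≤ b)
    (hf : ContinuousOn f (Icc a b)) (hf' : ∀ x ∈ Ioo a b, HasDerivAt f 0 x) : f b = f a := by
  rcases hab.eq_or_lt with rfl | hlt
  · rfl
  obtain ⟨c, -, hc⟩ := exists_hasDerivAt_eq_slope f (fun _ => 0) hlt hf hf'
  rw [eq_comm, div_eq_zero_iff, sub_eq_zero] at hc
  exact hc.resolve_right (sub_pos.2 hlt).ne'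

lemma abs_log_one_sub_div_le {t : ℝ} (ht : t ∈ Ioc (0 : ℝ) 1) :
    |log (1 - t) / t| ≤ 2 + 2 * |log (1 - t)| := by
  obtain ⟨ht0, ht1⟩ := ht
  rw [abs_div, abs_of_pos ht0, div_le_iff₀ ht0]
  rcases le_or_gt t (1 / 2) with hsmall | hlarge
  · have h1t : 0 < 1 - t := by linarith
    have hlog_nonpos : log (1 - t) ≤ 0 := log_nonpos h1t.le (by linarith)
    have hlog_ge : -(2 * t) ≤ log (1 - t) := by
      have hlower := one_sub_inv_le_log_of_pos h1t
      have : 1 - (1 - t)⁻¹ = -(t / (1 - t)) := by field_simp; ring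
      have : t / (1 - t) ≤ 2 * t := by rw [div_le_iff₀ h1t]; nlinarith
      linarith
    rw [abs_of_nonpos hlog_nonpos]
    nlinarith
  · nlinarith [abs_nonneg (log (1 - t))]

lemma intervalIntegrable_log_one_sub_div :
    IntervalIntegrable (fun t => log (1 - t) / t) volume 0 1 := by
  have hlog : IntervalIntegrable (fun t => log (1 - t)) volume 0 1 := by
    simpa using (intervalIntegral.intervalIntegrable_log' (a := 1) (b := 0)).comp_sub_left 1
  refine ((intervalIntegrable_const (c := (2 : ℝ))).add (hlog.abs.const_mul 2)).mono_fun'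
    (by fun_prop : Measurable fun t : ℝ => log (1 - t) / t).aestronglyMeasurable ?_
  rw [uIoc_of_le zero_le_one]
  filter_upwards [ae_restrict_mem measurableSet_Ioc] with t ht
  exact abs_log_one_sub_div_le ht

lemma hasDerivAt_Li2 {x : ℝ} (hx : x ∈ Ioo (0 : ℝ) 1) :
    HasDerivAt Li2 (-(log (1 - x) / x)) x := by
  have hint : IntervalIntegrable (fun t => log (1 - t) / t) volume 0 x :=
    intervalIntegrable_log_one_sub_div.mono_set (uIcc_subset_uIcc_left (by
      rw [uIcc_of_le zero_le_one]; exact ⟨hx.1.le, hx.2.le⟩))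
  have hcont : ContinuousAt (fun t => log (1 - t) / t) x :=
    ((continuousAt_const.sub continuousAt_id).log (sub_pos.2 hx.2).ne').div continuousAt_id
      hx.1.ne'
  have hmeas : Measurable fun t : ℝ => log (1 - t) / t := by fun_prop
  exact (intervalIntegral.integral_hasDerivAt_right hint
    hmeas.aestronglyMeasurable.stronglyMeasurableAtFilter hcont).neg

lemma continuousOn_Li2 : ContinuousOn Li2 (Icc 0 1) := by
  have h := intervalIntegral.continuousOn_primitive_interval
    ((intervalIntegrable_iff' (f := fun t => log (1 - t) / t)).1 intervalIntegrable_log_one_sub_div)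
  rw [uIcc_of_le zero_le_one] at h
  exact h.neg

lemma continuousAt_log_mul_log_one_sub {x : ℝ} (hx : x < 1) :
    ContinuousAt (fun y => log y * log (1 - y)) x := by
  set g : ℝ → ℝ := fun t => log (1 - t)
  -- `dslope g 0` is `log (1 - y) / y`, extended continuously across `0` by `g' 0 = -1`.
  have hg : ∀ y, log y * log (1 - y) = y * log y * dslope g 0 y := by
    intro y
    rcases eq_or_ne y 0 with rfl | hy
    · simp
    · rw [dslope_of_ne _ hy, slope_def_field]
      simp only [sub_zero, log_one, g]
      field_simp
  have hdslope : ContinuousAt (dslope g 0) x := by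
    rcases eq_or_ne x 0 with rfl | hx0
    · exact continuousAt_dslope_same.2 (by fun_prop (disch := norm_num))
    · exact (continuousAt_dslope_of_ne hx0).2
        ((continuousAt_const.sub continuousAt_id).log (sub_pos.2 hx).ne')
  simp_rw [hg]
  exact continuous_mul_log.continuousAt.mul hdslope

lemma continuous_log_mul_log_one_sub : Continuous fun x : ℝ => log x * log (1 - x) := by
  refine continuous_iff_continuousAt.2 fun x => ?_
  rcases lt_or_ge x 1 with hx | hx
  · exact continuousAt_log_mul_log_one_sub hx
  · have h := (continuousAt_log_mul_log_one_sub (x := 1 - x) (by linarith)).comp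
      (continuousAt_const.sub continuousAt_id)
    convert h using 2 with y
    simp only [Function.comp, sub_sub_cancel]
    ring

lemma continuousOn_rogersL : ContinuousOn rogersL (Icc 0 1) := by
  have h := (continuous_log_mul_log_one_sub.const_mul (1 / 2)).continuousOn (s := Icc 0 1)
  simp only [← mul_assoc] at h
  exact continuousOn_Li2.add h

noncomputable def rogersLDeriv (x : ℝ) : ℝ := -(log (1 - x) / x + log x / (1 - x)) / 2

lemma hasDerivAt_rogersL {x : ℝ} (hx : x ∈ Ioo (0 : ℝ) 1) :
    HasDerivAt rogersL (rogersLDeriv x) x := by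
  have h1x : 1 - x ≠ 0 := (sub_pos.2 hx.2).ne'
  have hlog_one_sub : HasDerivAt (fun y => log (1 - y)) (-1 / (1 - x)) x :=
    ((hasDerivAt_id x).const_sub 1).log h1x
  refine ((hasDerivAt_Li2 hx).add
    (((hasDerivAt_log hx.1.ne').const_mul (1 / 2)).mul hlog_one_sub)).congr_deriv ?_
  rw [rogersLDeriv]
  field_simp
  ring

lemma rogersLDeriv_duplication {y : ℝ} (hy : y ∈ Ioo (0 : ℝ) 1) :
    rogersLDeriv (y ^ 2) * (2 * y) + 2 * (rogersLDeriv (y / (1 + y)) * (1 / (1 + y) ^ 2)) =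
      2 * rogersLDeriv y := by
  obtain ⟨hy0, hy1⟩ := hy
  have h1m : 0 < 1 - y := by linarith
  have h1p : 0 < 1 + y := by linarith
  have hsq : log (1 - y ^ 2) = log (1 - y) + log (1 + y) := by
    rw [← log_mul h1m.ne' h1p.ne']; ring_nf
  have hcompl : 1 - y / (1 + y) = (1 + y)⁻¹ := by field_simp; ring
  have hne : 1 - y ^ 2 ≠ 0 := by nlinarith
  simp only [rogersLDeriv, log_pow, hsq, hcompl, log_inv, log_div hy0.ne' h1p.ne']
  field_simp
  ring

lemma hasDerivAt_rogersL_duplication_defect {y : ℝ} (hy : y ∈ Ioo (0 : ℝ) 1) :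
    HasDerivAt (fun z => rogersL (z ^ 2) + 2 * rogersL (z / (1 + z)) - 2 * rogersL z) 0 y := by
  obtain ⟨hy0, hy1⟩ := hy
  have h1p : 1 + y ≠ 0 := by linarith
  have hsq : y ^ 2 ∈ Ioo (0 : ℝ) 1 := ⟨by positivity, by nlinarith⟩
  have hquot : y / (1 + y) ∈ Ioo (0 : ℝ) 1 :=
    ⟨by positivity, by rw [div_lt_one (by linarith)]; linarith⟩
  have hdquot : HasDerivAt (fun z => z / (1 + z)) (1 / (1 + y) ^ 2) y := by
    refine ((hasDerivAt_id' y).div ((hasDerivAt_id' y).const_add 1) h1p).congr_deriv ?_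
    ring
  have hdsq : HasDerivAt (fun z : ℝ => z ^ 2) (2 * y) y := by simpa using hasDerivAt_pow 2 y
  refine ((((hasDerivAt_rogersL hsq).comp (h := fun z => z ^ 2) y hdsq).add
    (((hasDerivAt_rogersL hquot).comp (h := fun z => z / (1 + z)) y hdquot).const_mul 2)).sub
    ((hasDerivAt_rogersL ⟨hy0, hy1⟩).const_mul 2)).congr_deriv ?_
  rw [rogersLDeriv_duplication ⟨hy0, hy1⟩, sub_self]

lemma rogersL_zero : rogersL 0 = 0 := by
  simp [rogersL, Li2]

lemma continuousOn_rogersL_duplication_defect :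
    ContinuousOn (fun z => rogersL (z ^ 2) + 2 * rogersL (z / (1 + z)) - 2 * rogersL z)
      (Icc 0 1) := by
  have hsq : MapsTo (fun z : ℝ => z ^ 2) (Icc 0 1) (Icc 0 1) := fun z hz =>
    ⟨by positivity, pow_le_one₀ hz.1 hz.2⟩
  have hquot : MapsTo (fun z : ℝ => z / (1 + z)) (Icc 0 1) (Icc 0 1) := fun z hz =>
    ⟨by have := hz.1; positivity, div_le_one_of_le₀ (by linarith) (by linarith [hz.1])⟩
  refine ((continuousOn_rogersL.comp (continuousOn_pow 2) hsq).add
    (continuousOn_const.mul (continuousOn_rogersL.comp ?_ hquot))).sub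
    (continuousOn_const.mul continuousOn_rogersL)
  exact continuousOn_id.div (continuousOn_const.add continuousOn_id)
    fun z hz => by linarith [hz.1]

/-- Duplication identity for the Rogers dilogarithm on `[0,1]`. -/
theorem rogersL_duplication (x : ℝ) (hx0 : 0 ≤ x) (hx1 : x ≤ 1) :
    2 * rogersL x = rogersL (x ^ 2) + 2 * rogersL (x / (1 + x)) := by
  have hconst := eq_of_hasDerivAt_zero hx0
    (continuousOn_rogersL_duplication_defect.mono (Icc_subset_Icc_right hx1))
    fun y hy => hasDerivAt_rogersL_duplication_defect ⟨hy.1, hy.2.trans_le hx1⟩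
  norm_num [rogersL_zero] at hconst
  linarith
end

section
/- For every L > 0, Φ(L) := (1/4)·log(1/(1−e^{−L}))·log((1+a)/(1−a)) + 2·∫_a^1 (−log t)/(1−t²) dt, where a = √(1 − e^{−L}), satisfies Φ(L) ≥ ((L+2)/4)·e^{−L}. -/
open Real MeasureTheory

/-!
With `1 - a² = e^{-L}`, the first factor `-log (1 - a²)` is at least `e^{-L}` and the second,
`log ((1 + a)/(1 - a))`, is at least `L`. In the integral, `-log t ≥ 1 - t` bounds the integrand
below by `1/(1 + t)`, whose integral `log (2/(1 + a))` is at least `(1 - a)/2 ≥ e^{-L}/4`.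
-/

namespace Real

lemma le_neg_log_one_sub {x : ℝ} (hx : x < 1) : x ≤ -log (1 - x) := by
  linarith [log_le_sub_one_of_pos (sub_pos.2 hx)]

lemma neg_log_one_sub_sq_le_log_div {a : ℝ} (ha0 : 0 ≤ a) (ha1 : a < 1) :
    -log (1 - a ^ 2) ≤ log ((1 + a) / (1 - a)) := by
  have hfactor : 1 - a ^ 2 = (1 - a) * (1 + a) := by ring
  rw [hfactor, log_mul (by linarith) (by linarith), log_div (by linarith) (by linarith)]
  linarith [log_nonneg (by linarith : (1 : ℝ) ≤ 1 + a)]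

lemma inv_one_add_le_neg_log_div_one_sub_sq {t : ℝ} (ht0 : 0 < t) (ht1 : t < 1) :
    (1 + t)⁻¹ ≤ -log t / (1 - t ^ 2) := by
  have hfactor : 1 - t ^ 2 = (1 - t) * (1 + t) := by ring
  rw [hfactor, ← div_div, inv_eq_one_div, div_le_div_iff_of_pos_right (by linarith),
    le_div_iff₀ (by linarith)]
  linarith [log_le_sub_one_of_pos ht0]

lemma norm_neg_log_div_one_sub_sq_le_inv {t : ℝ} (ht0 : 0 < t) (ht1 : t ≤ 1) :
    ‖-log t / (1 - t ^ 2)‖ ≤ t⁻¹ := by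
  rcases ht1.eq_or_lt with rfl | ht_lt
  · simp
  have hfactor : 1 - t ^ 2 = (1 - t) * (1 + t) := by ring
  have hlog : -log t ≤ (1 - t) / t := by
    rw [← log_inv, sub_div, div_self ht0.ne', one_div]
    linarith [log_le_sub_one_of_pos (inv_pos.2 ht0)]
  have hnonneg : 0 ≤ -log t := neg_nonneg.2 (log_nonpos ht0.le ht_lt.le)
  rw [norm_of_nonneg (div_nonneg hnonneg (by nlinarith)), hfactor]
  calc -log t / ((1 - t) * (1 + t))
      ≤ (1 - t) / t / ((1 - t) * (1 + t)) := by gcongr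
    _ = (t * (1 + t))⁻¹ := by field_simp [(sub_pos.2 ht_lt).ne']
    _ ≤ t⁻¹ := by gcongr; nlinarith

lemma intervalIntegrable_neg_log_div_one_sub_sq {a : ℝ} (ha0 : 0 < a) (ha1 : a ≤ 1) :
    IntervalIntegrable (fun t ↦ -log t / (1 - t ^ 2)) volume a 1 := by
  refine IntervalIntegrable.mono_fun' (g := fun t ↦ t⁻¹) ?_ ?_ ?_
  · exact intervalIntegral.intervalIntegrable_inv
      (fun t ht ↦ (ha0.trans_le (Set.uIcc_of_le ha1 ▸ ht).1).ne') continuousOn_id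
  · exact (measurable_log.neg.div (by fun_prop)).aestronglyMeasurable
  · rw [Set.uIoc_of_le ha1]
    filter_upwards [ae_restrict_mem measurableSet_Ioc] with t ht
    exact norm_neg_log_div_one_sub_sq_le_inv (ha0.trans ht.1) ht.2

lemma integral_inv_one_add {a b : ℝ} (ha : -1 < a) (hb : -1 < b) :
    ∫ t in a..b, (1 + t)⁻¹ = log ((1 + b) / (1 + a)) :=
  (intervalIntegral.integral_comp_add_left (fun x ↦ x⁻¹) 1).trans
    (integral_inv_of_pos (by linarith) (by linarith))

lemma log_two_div_one_add_le_integral {a : ℝ} (ha0 : 0 < a) (ha1 : a ≤ 1) :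
    log (2 / (1 + a)) ≤ ∫ t in a..1, -log t / (1 - t ^ 2) := by
  rw [← one_add_one_eq_two, ← integral_inv_one_add (by linarith) (by norm_num)]
  refine intervalIntegral.integral_mono_on_of_le_Ioo ha1 ?_
    (intervalIntegrable_neg_log_div_one_sub_sq ha0 ha1)
    (fun t ht ↦ inv_one_add_le_neg_log_div_one_sub_sq (ha0.trans ht.1) ht.2)
  exact intervalIntegral.intervalIntegrable_inv
    (fun t ht ↦ by linarith [(Set.uIcc_of_le ha1 ▸ ht).1]) (by fun_prop)

lemma one_sub_le_two_mul_log_two_div_one_add {a : ℝ} (ha : -1 < a) :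
    1 - a ≤ 2 * log (2 / (1 + a)) := by
  have h := one_sub_inv_le_log_of_pos (div_pos two_pos (by linarith : 0 < 1 + a))
  rw [inv_div] at h
  linarith

end Real

/-- Lower bound for the decomposed form of `Φ`. -/
theorem Phi_lower_bound (L : ℝ) (hL : 0 < L) (a : ℝ)
    (ha : a = Real.sqrt (1 - Real.exp (-L))) :
    (1 / 4) * Real.log (1 / (1 - Real.exp (-L))) * Real.log ((1 + a) / (1 - a))
        + 2 * ∫ t in a..(1 : ℝ), (-Real.log t) / (1 - t ^ 2)
      ≥ ((L + 2) / 4) * Real.exp (-L) := by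
  have hexp_lt : exp (-L) < 1 := exp_lt_one_iff.2 (neg_lt_zero.2 hL)
  have hexp_pos : 0 < exp (-L) := exp_pos _
  have ha_sq : a ^ 2 = 1 - exp (-L) := by
    rw [ha, sq_sqrt (by linarith)]
  have ha0 : 0 < a := by rw [ha]; exact sqrt_pos.2 (by linarith)
  have ha1 : a < 1 := by nlinarith
  have hfirst : exp (-L) ≤ log (1 / (1 - exp (-L))) := by
    rw [one_div, log_inv]; exact le_neg_log_one_sub hexp_lt
  have hsecond : L ≤ log ((1 + a) / (1 - a)) := by
    have h := neg_log_one_sub_sq_le_log_div ha0.le ha1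
    rwa [ha_sq, sub_sub_cancel, log_exp, neg_neg] at h
  have hgap : exp (-L) / 2 ≤ 1 - a := by nlinarith
  have hintegral : exp (-L) / 4 ≤ ∫ t in a..1, -log t / (1 - t ^ 2) := by
    linarith [log_two_div_one_add_le_integral ha0 ha1.le,
      one_sub_le_two_mul_log_two_div_one_add (by linarith : -1 < a)]
  nlinarith [mul_le_mul hfirst hsecond hL.le (hexp_pos.le.trans hfirst)]
end

section
/- Let c < d be reals and let x < c. Then ∫_c^d log|((x−c)(x−d))/((y−c)(y−d))| / (y−x)² dy = (2/(x−d))·log|(x−c)/(d−c)| − (2/(x−c))·log|(x−d)/(c−d)|, interpreting the integral as an improper (convergent) integral at the endpoints y = c and y = d. -/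
open Real MeasureTheory

/-!
Splitting the logarithm, the integrand becomes `log ((x - c)(x - d)) / (y - x)²` minus
`log (y - a) / (y - x)²` for `a = c` and `a = d` (`Real.log` is even, so `log (y - d)` is
`log (d - y)` on `(c, d)`). Integration by parts gives `log (y - a) / (y - x)²` the primitive
`((y - a) log (y - a) / (y - x) - log (y - x)) / (a - x)`, which is continuous at `y = a`
because `t log t → 0`; as `log` is locally integrable, the fundamental theorem of calculus applies
on all of `[c, d]`.
-/

open Set intervalIntegral
open scoped Interval

namespace Real

theorem log_sub_comm (a b : ℝ) : log (a - b) = log (b - a) := by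
  rw [← neg_sub, log_neg_eq_log]

theorem log_abs_div_mul {k u v : ℝ} (hk : k ≠ 0) (hu : u ≠ 0) (hv : v ≠ 0) :
    log |k / (u * v)| = log k - log u - log v := by
  rw [log_abs, log_div hk (mul_ne_zero hu hv), log_mul hu hv]
  ring

end Real

noncomputable def logSubDivSqPrimitive (x a y : ℝ) : ℝ :=
  ((y - a) * log (y - a) / (y - x) - log (y - x)) / (a - x)

section

variable {x a y c d : ℝ}

theorem hasDerivAt_logSubDivSqPrimitive (hax : a ≠ x) (hya : y ≠ a) (hyx : y ≠ x) :
    HasDerivAt (logSubDivSqPrimitive x a) (log (y - a) / (y - x) ^ 2) y := by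
  have hya' : y - a ≠ 0 := sub_ne_zero.mpr hya
  have hyx' : y - x ≠ 0 := sub_ne_zero.mpr hyx
  have hax' : a - x ≠ 0 := sub_ne_zero.mpr hax
  have hA : HasDerivAt (fun y => y - a) 1 y := (hasDerivAt_id y).sub_const a
  have hX : HasDerivAt (fun y => y - x) 1 y := (hasDerivAt_id y).sub_const x
  refine ((((hA.mul (hA.log hya')).div hX hyx').sub (hX.log hyx')).div_const (a - x)).congr_deriv ?_
  simp only [Pi.mul_apply]
  field_simp
  ring

theorem continuousAt_logSubDivSqPrimitive (hyx : y ≠ x) :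
    ContinuousAt (logSubDivSqPrimitive x a) y := by
  have hyx' : y - x ≠ 0 := sub_ne_zero.mpr hyx
  have hmul : ContinuousAt (fun y => (y - a) * log (y - a)) y :=
    (continuous_mul_log.comp (continuous_sub_right a)).continuousAt
  unfold logSubDivSqPrimitive
  fun_prop (disch := assumption)

theorem continuousOn_inv_sub_sq (hx : x ∉ [[c, d]]) :
    ContinuousOn (fun y => ((y - x) ^ 2)⁻¹) [[c, d]] :=
  fun _ hy => ((continuous_sub_right x).pow 2).continuousAt.inv₀
    (pow_ne_zero 2 (sub_ne_zero.mpr (ne_of_mem_of_not_mem hy hx))) |>.continuousWithinAt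

theorem intervalIntegrable_div_sub_sq (k : ℝ) (hx : x ∉ [[c, d]]) :
    IntervalIntegrable (fun y => k / (y - x) ^ 2) volume c d := by
  simpa only [div_eq_mul_inv] using (continuousOn_inv_sub_sq hx).intervalIntegrable.const_mul k

theorem intervalIntegrable_log_sub_div_sq (hx : x ∉ [[c, d]]) :
    IntervalIntegrable (fun y => log (y - a) / (y - x) ^ 2) volume c d := by
  have hlog : IntervalIntegrable (fun y => log (y - a)) volume c d := by
    simpa using (intervalIntegrable_log' (a := c - a) (b := d - a)).comp_sub_right a
  simpa only [div_eq_mul_inv] using hlog.mul_continuousOn (continuousOn_inv_sub_sq hx)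

theorem integral_div_sub_sq (k : ℝ) (hx : x ∉ [[c, d]]) :
    ∫ y in c..d, k / (y - x) ^ 2 = k / (c - x) - k / (d - x) := by
  have hderiv : ∀ y ∈ [[c, d]], HasDerivAt (fun y => -(k / (y - x))) (k / (y - x) ^ 2) y := by
    intro y hy
    have hyx : y - x ≠ 0 := sub_ne_zero.mpr (ne_of_mem_of_not_mem hy hx)
    refine ((hasDerivAt_const y k).div ((hasDerivAt_id y).sub_const x) hyx).neg.congr_deriv ?_
    simp only [id_eq]
    ring
  rw [integral_eq_sub_of_hasDerivAt hderiv (intervalIntegrable_div_sub_sq k hx)]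
  ring

theorem integral_log_sub_div_sq (hcd : c ≤ d) (hx : x ∉ [[c, d]]) (ha : a ∉ Ioo c d)
    (hax : a ≠ x) :
    ∫ y in c..d, log (y - a) / (y - x) ^ 2 =
      logSubDivSqPrimitive x a d - logSubDivSqPrimitive x a c := by
  have hx' : x ∉ Icc c d := by rwa [← uIcc_of_le hcd]
  refine integral_eq_sub_of_hasDerivAt_of_le hcd (fun y hy =>
      (continuousAt_logSubDivSqPrimitive (ne_of_mem_of_not_mem hy hx')).continuousWithinAt)
    (fun y hy => hasDerivAt_logSubDivSqPrimitive hax (ne_of_mem_of_not_mem hy ha)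
      (ne_of_mem_of_not_mem (Ioo_subset_Icc_self hy) hx'))
    (intervalIntegrable_log_sub_div_sq hx)

end

/-- The inner integral of the cusp-lasso computation. -/
theorem inner_integral_eval (x c d : ℝ) (hxc : x < c) (hcd : c < d) :
    (∫ y in c..d,
        Real.log |((x - c) * (x - d)) / ((y - c) * (y - d))| / (y - x) ^ 2) =
      (2 / (x - d)) * Real.log |(x - c) / (d - c)|
        - (2 / (x - c)) * Real.log |(x - d) / (c - d)| := by
  have hxd : x < d := hxc.trans hcd
  have hxc' : x - c ≠ 0 := sub_ne_zero.mpr hxc.ne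
  have hxd' : x - d ≠ 0 := sub_ne_zero.mpr hxd.ne
  have hx : x ∉ [[c, d]] := by rw [uIcc_of_le hcd.le]; exact fun h => hxc.not_ge h.1
  have hsplit : EqOn (fun y => log |((x - c) * (x - d)) / ((y - c) * (y - d))| / (y - x) ^ 2)
      (fun y => log ((x - c) * (x - d)) / (y - x) ^ 2 - log (y - c) / (y - x) ^ 2
        - log (y - d) / (y - x) ^ 2) (Ioo c d) := fun y hy => by
    dsimp only
    rw [log_abs_div_mul (mul_ne_zero hxc' hxd') (sub_ne_zero.mpr hy.1.ne')
      (sub_ne_zero.mpr hy.2.ne)]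
    ring
  rw [integral_congr_Ioo_of_le hcd.le hsplit,
    integral_sub ((intervalIntegrable_div_sub_sq _ hx).sub
      (intervalIntegrable_log_sub_div_sq hx)) (intervalIntegrable_log_sub_div_sq hx),
    integral_sub (intervalIntegrable_div_sub_sq _ hx) (intervalIntegrable_log_sub_div_sq hx),
    integral_div_sub_sq _ hx,
    integral_log_sub_div_sq hcd.le hx (by simp) hxc.ne',
    integral_log_sub_div_sq hcd.le hx (by simp) hxd.ne']
  simp only [logSubDivSqPrimitive, sub_self, zero_mul, zero_div, zero_sub, log_abs]
  rw [log_mul hxc' hxd', log_div hxc' (sub_ne_zero.mpr hcd.ne'),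
    log_div hxd' (sub_ne_zero.mpr hcd.ne), log_sub_comm c x, log_sub_comm d x, log_sub_comm c d]
  field_simp [sub_ne_zero.mpr hxc.ne', sub_ne_zero.mpr hxd.ne']
  ring
end

section
/- Fix u ∈ ℝ and z = i or z = −i. Define Ψ_z(x) = Li₂((u−x)/(u−z)) + log|u−x|·Log((x−z)/(u−z)) for real x ≠ u, where Li₂ and Log are the principal branches. Then Ψ_z is differentiable on each component of ℝ∖{u} with derivative Ψ_z'(x) = log|u−x|/(x−z). -/
open Complex MeasureTheory

/-- The principal branch of the complex dilogarithm, defined on `ℂ ∖ [1,∞)` by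
`Li₂(w) = -∫₀¹ Log(1 − t·w)/t dt` (integration along the segment from `0` to `w`). -/
noncomputable def cLi2 (w : ℂ) : ℂ := -∫ t in (0 : ℝ)..1, Complex.log (1 - t * w) / t

/-!
Differentiating under the integral sign gives `Li₂'(w) = ∫₀¹ (1 - t w)⁻¹ dt = -Log(1 - w)/w`
whenever `1 - w` lies in the slit plane. Domination is uniform near `w` because the segments
`[1, 1 - v]` for `v` close to `w` lie in the slit plane and stay a positive distance away from `0`
(compactness). Along `w = (u - x)/(u - z)` we have `1 - w = (x - z)/(u - z)`, which is not real
for `x ≠ u` since `z` is not, so the chain rule applies; the resulting term `Log(1 - w)/(u - x)`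
cancels the one coming from `d/dx log|u - x| = 1/(x - u)`.
-/

open Metric Set
lemma one_sub_mul_mem_slitPlane {w : ℂ} (hw : 1 - w ∈ slitPlane) {t : ℝ} (ht : t ∈ Icc 0 1) :
    1 - t * w ∈ slitPlane := by
  rw [sub_eq_add_neg] at hw
  simpa [sub_eq_add_neg, smul_eq_mul] using
    starConvex_one_slitPlane.add_smul_mem hw ht.1 ht.2

lemma exists_closedBall_le_norm_one_sub_mul {w : ℂ} (hw : 1 - w ∈ slitPlane) :
    ∃ δ > 0, ∃ m > 0, ∀ v ∈ closedBall w δ,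
      1 - v ∈ slitPlane ∧ ∀ t ∈ Icc (0 : ℝ) 1, m ≤ ‖1 - t * v‖ := by
  have hopen : IsOpen {v : ℂ | 1 - v ∈ slitPlane} :=
    isOpen_slitPlane.preimage (continuous_const.sub continuous_id)
  obtain ⟨δ, hδ, hball⟩ := nhds_basis_closedBall.mem_iff.1 (hopen.mem_nhds hw)
  have hK : IsCompact (Icc (0 : ℝ) 1 ×ˢ closedBall w δ) :=
    isCompact_Icc.prod (isCompact_closedBall w δ)
  obtain ⟨p, hp, hmin⟩ := hK.exists_isMinOn
    ⟨(0, w), ⟨left_mem_Icc.2 zero_le_one, mem_closedBall_self hδ.le⟩⟩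
    (f := fun p : ℝ × ℂ => ‖1 - p.1 * p.2‖) (by fun_prop)
  refine ⟨δ, hδ, _, norm_pos_iff.2 (slitPlane_ne_zero
    (one_sub_mul_mem_slitPlane (hball hp.2) hp.1)), fun v hv => ⟨hball hv, fun t ht => ?_⟩⟩
  exact hmin (mk_mem_prod ht hv)

lemma norm_log_one_sub_mul_le {w : ℂ} {m : ℝ} (hw : 1 - w ∈ slitPlane)
    (hm : ∀ t ∈ Icc (0 : ℝ) 1, m ≤ ‖1 - t * w‖) (hm0 : 0 < m) {t : ℝ} (ht : t ∈ Icc (0 : ℝ) 1) :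
    ‖log (1 - t * w)‖ ≤ ‖w‖ / m * t := by
  have hslit : 1 + -(t * w) ∈ slitPlane := by
    simpa [sub_eq_add_neg] using one_sub_mul_mem_slitPlane hw ht
  have hint : ‖∫ s in (0 : ℝ)..1, (1 + s • -((t : ℂ) * w))⁻¹‖ ≤ m⁻¹ := by
    refine (intervalIntegral.norm_integral_le_of_norm_le_const (C := m⁻¹) fun s hs => ?_).trans_eq
      (by simp)
    rw [uIoc_of_le zero_le_one] at hs
    have hst : s * t ∈ Icc (0 : ℝ) 1 :=
      ⟨mul_nonneg hs.1.le ht.1, mul_le_one₀ hs.2 ht.1 ht.2⟩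
    rw [norm_inv]
    refine inv_anti₀ hm0 ?_
    simpa [smul_eq_mul, ← sub_eq_add_neg, mul_assoc] using hm _ hst
  rw [sub_eq_add_neg, log_eq_integral hslit, norm_mul, norm_neg, norm_mul, norm_real,
    Real.norm_of_nonneg ht.1]
  calc t * ‖w‖ * ‖∫ s in (0 : ℝ)..1, (1 + s • -((t : ℂ) * w))⁻¹‖
      ≤ t * ‖w‖ * m⁻¹ := mul_le_mul_of_nonneg_left hint (mul_nonneg ht.1 (norm_nonneg w))
    _ = ‖w‖ / m * t := by ring

lemma integral_inv_one_sub_mul {w : ℂ} (hw : 1 - w ∈ slitPlane) (hw0 : w ≠ 0) :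
    ∫ t in (0 : ℝ)..1, (1 - t * w)⁻¹ = -log (1 - w) / w := by
  rw [sub_eq_add_neg, log_eq_integral hw]
  field_simp
  simp [sub_eq_add_neg]

lemma hasDerivAt_log_one_sub_mul_div {v : ℂ} {t : ℝ} (hv : 1 - t * v ∈ slitPlane) (ht : t ≠ 0) :
    HasDerivAt (fun w : ℂ => log (1 - t * w) / t) (-(1 - t * v)⁻¹) v := by
  have h := ((((hasDerivAt_id v).const_mul (t : ℂ)).const_sub 1).clog hv).div_const (t : ℂ)
  refine h.congr_deriv ?_
  field_simp [ofReal_ne_zero.2 ht]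
  simp

open scoped Interval in
theorem hasDerivAt_cLi2 {w : ℂ} (hw : 1 - w ∈ slitPlane) (hw0 : w ≠ 0) :
    HasDerivAt cLi2 (-log (1 - w) / w) w := by
  obtain ⟨δ, hδ, m, hm0, hm⟩ := exists_closedBall_le_norm_one_sub_mul hw
  have hmeas : ∀ v : ℂ, AEStronglyMeasurable (fun t : ℝ => log (1 - t * v) / t)
      (volume.restrict (Ι 0 1)) := fun v =>
    ((measurable_log.comp (by fun_prop)).div (by fun_prop)).aestronglyMeasurable
  have hint : IntervalIntegrable (fun t : ℝ => log (1 - t * w) / t) volume 0 1 := by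
    rw [intervalIntegrable_iff_integrableOn_Ioc_of_le zero_le_one]
    refine IntegrableOn.of_bound measure_Ioc_lt_top (by simpa using hmeas w) (‖w‖ / m) ?_
    refine (ae_restrict_iff' measurableSet_Ioc).2 (.of_forall fun t ht => ?_)
    rw [norm_div, norm_real, Real.norm_of_nonneg ht.1.le, div_le_iff₀ ht.1]
    exact norm_log_one_sub_mul_le hw (hm w (mem_closedBall_self hδ.le)).2 hm0
      (Ioc_subset_Icc_self ht)
  obtain ⟨-, hderiv⟩ := intervalIntegral.hasDerivAt_integral_of_dominated_loc_of_deriv_le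
    (F := fun v t => log (1 - t * v) / t) (F' := fun v t => -(1 - t * v)⁻¹)
    (bound := fun _ => m⁻¹) (closedBall_mem_nhds w hδ) (.of_forall hmeas) hint
    (by fun_prop)
    (.of_forall fun t ht v hv => by
      rw [uIoc_of_le zero_le_one] at ht
      rw [norm_neg, norm_inv]
      exact inv_anti₀ hm0 ((hm v hv).2 t (Ioc_subset_Icc_self ht)))
    intervalIntegrable_const
    (.of_forall fun t ht v hv => by
      rw [uIoc_of_le zero_le_one] at ht
      exact hasDerivAt_log_one_sub_mul_div
        (one_sub_mul_mem_slitPlane (hm v hv).1 (Ioc_subset_Icc_self ht)) ht.1.ne')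
  refine (hderiv.neg : HasDerivAt cLi2 _ w).congr_deriv ?_
  rw [intervalIntegral.integral_neg, neg_neg, integral_inv_one_sub_mul hw hw0]

lemma sub_div_sub_mem_slitPlane {z : ℂ} (hz : z.im ≠ 0) {x u : ℝ} (hx : x ≠ u) :
    ((x : ℂ) - z) / ((u : ℂ) - z) ∈ slitPlane := by
  have huz : (u : ℂ) - z ≠ 0 := fun h => hz (by simpa using congrArg im h)
  refine mem_slitPlane_iff.2 (Or.inr ?_)
  have him : (((x : ℂ) - z) / ((u : ℂ) - z)).im = z.im * (x - u) / normSq ((u : ℂ) - z) := by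
    rw [div_im]
    simp only [sub_re, sub_im, ofReal_re, ofReal_im]
    ring
  rw [him]
  exact div_ne_zero (mul_ne_zero hz (sub_ne_zero.2 hx)) (normSq_pos.2 huz).ne'

/-- The function `Ψ_z(x) = Li₂((u−x)/(u−z)) + log|u−x|·Log((x−z)/(u−z))`, for
`u ∈ ℝ` and `z = ±i`, is differentiable in the real variable `x ≠ u` with
derivative `log|u−x|/(x−z)`. -/
theorem hasDerivAt_Psi (u : ℝ) (z : ℂ) (hz : z = Complex.I ∨ z = -Complex.I)
    (x : ℝ) (hx : x ≠ u) :
    HasDerivAt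
      (fun x : ℝ =>
        cLi2 ((u - x) / ((u : ℂ) - z)) +
          (Real.log |u - x| : ℂ) * Complex.log (((x : ℂ) - z) / ((u : ℂ) - z)))
      ((Real.log |u - x| : ℂ) / ((x : ℂ) - z)) x := by
  have him : z.im ≠ 0 := by rcases hz with rfl | rfl <;> simp
  have huz : (u : ℂ) - z ≠ 0 := fun h => him (by simpa using congrArg im h)
  have hux : (u : ℂ) - x ≠ 0 := by exact_mod_cast sub_ne_zero.2 hx.symm
  have hslit := sub_div_sub_mem_slitPlane him hx
  have hone_sub : 1 - ((u : ℂ) - x) / ((u : ℂ) - z) = ((x : ℂ) - z) / ((u : ℂ) - z) := by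
    field_simp
    ring
  have hW : HasDerivAt (fun y : ℝ => ((u : ℂ) - y) / ((u : ℂ) - z)) (-1 / ((u : ℂ) - z)) x :=
    ((hasDerivAt_id (x : ℂ)).const_sub (u : ℂ)).div_const _ |>.comp_ofReal
  have hLi2 := (hasDerivAt_cLi2 (hone_sub ▸ hslit) (div_ne_zero hux huz)).comp x hW
  have hLog : HasDerivAt (fun y : ℝ => log (((y : ℂ) - z) / ((u : ℂ) - z)))
      (1 / ((u : ℂ) - z) / (((x : ℂ) - z) / ((u : ℂ) - z))) x :=
    (((hasDerivAt_id (x : ℂ)).sub_const z).div_const _ |>.comp_ofReal).clog_real hslit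
  have hRealLog :
      HasDerivAt (fun y : ℝ => ((Real.log |u - y| : ℝ) : ℂ)) ((-1 / (u - x) : ℝ) : ℂ) x := by
    simp_rw [Real.log_abs]
    exact (((hasDerivAt_id x).const_sub u).log (sub_ne_zero.2 hx.symm)).ofReal_comp
  refine (hLi2.add (hRealLog.mul hLog)).congr_deriv ?_
  rw [hone_sub]
  push_cast
  field_simp
  ring
end
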